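/- Define S_λ(f) = −𝔼[(Y − f(T)) K_T] + W_λ f for f ∈ ℋ (the expectation is an ℋ-valued Bochner integral). Then S_λ(f) = (f − μ) + W_λ μ for every f ∈ ℋ. Consequently, f_λ := μ − W_λ μ = (id − W_λ)μ is the unique element of ℋ with S_λ(f_λ) = 0, and it satisfies ‖μ − f_λ‖ = ‖W_λ μ‖ ≤ (λ J(μ, μ))^{1/2} = h^m J(μ, μ)^{1/2} ≤ h^m (J(μ, μ) + 1)^{1/2}. -/

import Mathlib

/-!
The score identity is tested against every `g ∈ ℋ`: by the reproducing property and the tower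
property of conditional expectation, `⟪𝔼[(Y − f(T)) K_T], g⟫ = V(μ − f, g)`, while `id − W_λ`
is exactly the map representing `V` through the inner product, `⟪x − W_λ x, g⟫ = V(x, g)`.
The bias bound is Cauchy–Schwarz for `J` together with `λ J ≤ ⟪·,·⟫`:
`‖W_λ μ‖² = λ J(μ, W_λ μ) ≤ (λ J(μ, μ))^{1/2} ‖W_λ μ‖`.
The Bochner integral exists because the kernel is bounded on `[0,1]`: by Parseval in the
orthonormal basis `h_v / ‖h_v‖`, `‖K_t‖² = Σ_v h_v(t)² / (1 + λγ_v) ≤ C_h² Σ_v 1 / (1 + λγ_v)`,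
which is finite since `γ_v ≥ c₀ (v + 1)^{2m}` with `2m > 1`.
-/

open scoped RealInnerProductSpace
open MeasureTheory

noncomputable section

/-- The RKHS framework of the paper: a real Hilbert space `H` of functions on `[0,1]`
(with evaluation map `ev`), whose inner product is `⟪f, g⟫ = V f g + lam * J f g` for
symmetric positive-semidefinite bilinear forms `V` and `J`, together with a simultaneously
orthogonal system `hvec` with eigenvalues `γ`, uniformly bounded by `Ch`, in which every
element expands, a reproducing kernel `K`, and the operator `W = W_lam` determined by
`⟪W f, g⟫ = lam * J f g`. -/
structure RKHSContext (lam : ℝ) (H : Type*) [NormedAddCommGroup H] [InnerProductSpace ℝ H] where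
  ev : H → ℝ → ℝ
  V : H →ₗ[ℝ] H →ₗ[ℝ] ℝ
  J : H →ₗ[ℝ] H →ₗ[ℝ] ℝ
  V_symm : ∀ f g : H, V f g = V g f
  J_symm : ∀ f g : H, J f g = J g f
  V_nonneg : ∀ f : H, 0 ≤ V f f
  J_nonneg : ∀ f : H, 0 ≤ J f f
  inner_eq : ∀ f g : H, ⟪f, g⟫ = V f g + lam * J f g
  hvec : ℕ → H
  γ : ℕ → ℝ
  γ_pos : ∀ v, 0 < γ v
  Ch : ℝ
  hvec_bound : ∀ v : ℕ, ∀ t ∈ Set.Icc (0:ℝ) 1, |ev (hvec v) t| ≤ Ch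
  V_orth : ∀ u v : ℕ, V (hvec u) (hvec v) = if u = v then 1 else 0
  J_orth : ∀ u v : ℕ, J (hvec u) (hvec v) = if u = v then γ u else 0
  expansion : ∀ g : H, HasSum (fun v => V g (hvec v) • hvec v) g
  K : ℝ → H
  reproducing : ∀ t ∈ Set.Icc (0:ℝ) 1, ∀ f : H, ⟪K t, f⟫ = ev f t
  W : H →ₗ[ℝ] H
  W_spec : ∀ f g : H, ⟪W f, g⟫ = lam * J f g

theorem summable_inv_of_mul_rpow_le {a : ℕ → ℝ} {c p : ℝ} (hc : 0 < c) (hp : 1 < p)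
    (ha : ∀ v : ℕ, c * ((v : ℝ) + 1) ^ p ≤ a v) : Summable fun v => (a v)⁻¹ := by
  have hpos : ∀ v : ℕ, 0 < c * ((v : ℝ) + 1) ^ p := fun v => by positivity
  have hshift : Summable fun v : ℕ => 1 / ((v : ℝ) + 1) ^ p := by
    simpa using (summable_nat_add_iff 1).mpr (Real.summable_one_div_nat_rpow.mpr hp)
  refine .of_nonneg_of_le (fun v => inv_nonneg.mpr ((hpos v).le.trans (ha v)))
    (fun v => ?_) (hshift.mul_left c⁻¹)
  calc (a v)⁻¹ ≤ (c * ((v : ℝ) + 1) ^ p)⁻¹ := inv_anti₀ (hpos v) (ha v)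
    _ = c⁻¹ * (1 / ((v : ℝ) + 1) ^ p) := by rw [mul_inv, one_div]

theorem norm_le_sqrt_of_inner_eq_bilinForm {E : Type*} [NormedAddCommGroup E]
    [InnerProductSpace ℝ E] (B : LinearMap.BilinForm ℝ E) (hB : LinearMap.IsSymm B)
    (hB_nonneg : ∀ y, 0 ≤ B y y) (hB_le : ∀ y, B y y ≤ ‖y‖ ^ 2) {x w : E}
    (hw : ∀ y, ⟪w, y⟫ = B x y) : ‖w‖ ≤ √(B x x) := by
  have hcs : B x w ≤ √(B x x) * √(B w w) := by
    rw [← Real.sqrt_mul (hB_nonneg x)]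
    exact (le_abs_self _).trans (Real.abs_le_sqrt (B.apply_sq_le_of_symm hB_nonneg hB x w))
  have hBw : √(B w w) ≤ ‖w‖ := (Real.sqrt_le_left (norm_nonneg w)).mpr (hB_le w)
  have hsq : ‖w‖ * ‖w‖ ≤ √(B x x) * ‖w‖ := by
    calc ‖w‖ * ‖w‖ = B x w := by rw [← real_inner_self_eq_norm_mul_norm, hw]
      _ ≤ √(B x x) * √(B w w) := hcs
      _ ≤ √(B x x) * ‖w‖ := by gcongr
  rcases (norm_nonneg w).eq_or_lt with hw0 | hw0
  · rw [← hw0]; positivity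
  · exact le_of_mul_le_mul_right hsq hw0

theorem rpow_one_div_two_mul_rpow_eq_sqrt {x : ℝ} (hx : 0 ≤ x) {m : ℝ} (hm : m ≠ 0) :
    (x ^ (1 / (2 * m))) ^ m = √x := by
  rw [← Real.rpow_mul hx, Real.sqrt_eq_rpow]
  congr 1
  field_simp

theorem integral_mul_eq_of_condExp_eq {Ω : Type*} {m mΩ : MeasurableSpace Ω} {P : Measure Ω}
    [IsFiniteMeasure P] (hm : m ≤ mΩ) {φ Y Z : Ω → ℝ} (hφ : StronglyMeasurable[m] φ) {c : ℝ}
    (hφ_bound : ∀ ω, ‖φ ω‖ ≤ c) (hY : Integrable Y P) (hYZ : P[Y | m] =ᵐ[P] Z) :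
    ∫ ω, φ ω * Y ω ∂P = ∫ ω, φ ω * Z ω ∂P := by
  have : IsFiniteMeasure (P.trim hm) := isFiniteMeasure_trim hm
  calc ∫ ω, φ ω * Y ω ∂P = ∫ ω, (P[φ * Y | m]) ω ∂P := (integral_condExp hm).symm
    _ = ∫ ω, φ ω * Z ω ∂P := by
      refine integral_congr_ae ?_
      filter_upwards [condExp_stronglyMeasurable_mul_of_bound hm hφ hY c
        (.of_forall hφ_bound), hYZ] with ω hω hωZ
      rw [hω, Pi.mul_apply, hωZ]

namespace RKHSContext

variable {lam : ℝ} {H : Type*} [NormedAddCommGroup H] [InnerProductSpace ℝ H]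
  (ctx : RKHSContext lam H)

theorem inner_hvec (u v : ℕ) :
    ⟪ctx.hvec u, ctx.hvec v⟫ = if u = v then 1 + lam * ctx.γ u else 0 := by
  rw [ctx.inner_eq, ctx.V_orth, ctx.J_orth]
  split_ifs <;> ring

theorem norm_hvec_sq (v : ℕ) : ‖ctx.hvec v‖ ^ 2 = 1 + lam * ctx.γ v := by
  rw [← real_inner_self_eq_norm_sq, inner_hvec, if_pos rfl]

theorem hvec_ne_zero (v : ℕ) : ctx.hvec v ≠ 0 := by
  intro h
  simpa [h] using ctx.V_orth v v

theorem orthonormal_normalize_hvec : Orthonormal ℝ fun v => ‖ctx.hvec v‖⁻¹ • ctx.hvec v := by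
  rw [orthonormal_iff_ite]
  intro u v
  simp only [real_inner_smul_left, real_inner_smul_right]
  split_ifs with h
  · subst h
    have := norm_ne_zero_iff.mpr (ctx.hvec_ne_zero u)
    rw [real_inner_self_eq_norm_mul_norm]
    field_simp
  · rw [ctx.inner_hvec, if_neg h, mul_zero, mul_zero]

theorem top_le_closure_span_hvec :
    ⊤ ≤ (Submodule.span ℝ (Set.range ctx.hvec)).topologicalClosure := by
  intro g _
  rw [← SetLike.mem_coe, Submodule.topologicalClosure_coe]
  refine mem_closure_of_tendsto (ctx.expansion g) (.of_forall fun s => ?_)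
  exact Submodule.sum_mem _ fun v _ => Submodule.smul_mem _ _ (Submodule.subset_span ⟨v, rfl⟩)

theorem secondCountableTopology (ctx : RKHSContext lam H) : SecondCountableTopology H := by
  suffices TopologicalSpace.SeparableSpace H from UniformSpace.secondCountable_of_separable H
  rw [← TopologicalSpace.isSeparable_univ_iff]
  refine ((Set.countable_range ctx.hvec).isSeparable.span (R := ℝ)).closure.mono fun g _ => ?_
  rw [← Submodule.topologicalClosure_coe]
  exact ctx.top_le_closure_span_hvec trivial

def normalizedBasis [CompleteSpace H] : HilbertBasis ℕ ℝ H :=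
  HilbertBasis.mk ctx.orthonormal_normalize_hvec <| by
    refine ctx.top_le_closure_span_hvec.trans (Submodule.topologicalClosure_mono ?_)
    refine Submodule.span_le.mpr (Set.range_subset_iff.mpr fun v => ?_)
    rw [← smul_inv_smul₀ (norm_ne_zero_iff.mpr (ctx.hvec_ne_zero v)) (ctx.hvec v)]
    exact Submodule.smul_mem _ _ (Submodule.subset_span ⟨v, rfl⟩)

theorem norm_K_sq_le [CompleteSpace H] (hs : Summable fun v => (‖ctx.hvec v‖ ^ 2)⁻¹)
    {t : ℝ} (ht : t ∈ Set.Icc 0 1) :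
    ‖ctx.K t‖ ^ 2 ≤ ctx.Ch ^ 2 * ∑' v, (‖ctx.hvec v‖ ^ 2)⁻¹ := by
  have hparseval := ctx.normalizedBasis.hasSum_inner_mul_inner (ctx.K t) (ctx.K t)
  rw [real_inner_self_eq_norm_sq] at hparseval
  have hterm : ∀ v, ⟪ctx.K t, ctx.normalizedBasis v⟫ * ⟪ctx.normalizedBasis v, ctx.K t⟫
      = ctx.ev (ctx.hvec v) t ^ 2 * (‖ctx.hvec v‖ ^ 2)⁻¹ := fun v => by
    rw [normalizedBasis, HilbertBasis.coe_mk, real_inner_comm (ctx.K t), real_inner_smul_right,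
      ctx.reproducing t ht]
    ring
  rw [← hparseval.tsum_eq, ← tsum_mul_left]
  refine hparseval.summable.tsum_le_tsum (fun v => ?_) (hs.mul_left _)
  rw [hterm, ← sq_abs (ctx.ev _ t)]
  gcongr
  exact ctx.hvec_bound v t ht

theorem exists_norm_K_le [CompleteSpace H] {m c₀ : ℝ} (hm : 1 / 2 < m) (hlam : 0 < lam)
    (hc₀ : 0 < c₀) (hγ : ∀ v : ℕ, c₀ * ((v : ℝ) + 1) ^ (2 * m) ≤ ctx.γ v) :
    ∃ C, ∀ t ∈ Set.Icc (0 : ℝ) 1, ‖ctx.K t‖ ≤ C := by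
  have hs : Summable fun v => (‖ctx.hvec v‖ ^ 2)⁻¹ :=
    summable_inv_of_mul_rpow_le (mul_pos hlam hc₀) (by linarith : (1 : ℝ) < 2 * m) fun v => by
      rw [norm_hvec_sq, mul_assoc]
      exact le_add_of_nonneg_of_le zero_le_one (mul_le_mul_of_nonneg_left (hγ v) hlam.le)
  exact ⟨_, fun t ht => Real.le_sqrt_of_sq_le (ctx.norm_K_sq_le hs ht)⟩

theorem norm_ev_le {C : ℝ} (hC : ∀ t ∈ Set.Icc (0 : ℝ) 1, ‖ctx.K t‖ ≤ C) {t : ℝ}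
    (ht : t ∈ Set.Icc 0 1) (f : H) : ‖ctx.ev f t‖ ≤ C * ‖f‖ := by
  rw [← ctx.reproducing t ht]
  exact (norm_inner_le_norm _ _).trans (mul_le_mul_of_nonneg_right (hC t ht) (norm_nonneg f))

theorem inner_sub_W_left (f g : H) : ⟪f - ctx.W f, g⟫ = ctx.V f g := by
  rw [inner_sub_left, ctx.inner_eq, ctx.W_spec]
  ring

theorem eq_sub_W_of_inner_eq_V {x f : H} (h : ∀ g, ⟪x, g⟫ = ctx.V f g) : x = f - ctx.W f :=
  ext_inner_right ℝ fun g => by rw [h, inner_sub_W_left]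

theorem norm_W_le (hlam : 0 ≤ lam) (f : H) : ‖ctx.W f‖ ≤ √(lam * ctx.J f f) := by
  refine norm_le_sqrt_of_inner_eq_bilinForm (lam • ctx.J) ⟨fun x y => ?_⟩ (fun y => ?_)
    (fun y => ?_) (ctx.W_spec f)
  · simp [ctx.J_symm x y]
  · exact mul_nonneg hlam (ctx.J_nonneg y)
  · rw [← real_inner_self_eq_norm_sq, ctx.inner_eq]
    simpa using ctx.V_nonneg y

variable [MeasurableSpace H] [OpensMeasurableSpace H]

theorem measurable_ev_comp {Ω : Type*} {mΩ : MeasurableSpace Ω} {T : Ω → ℝ} (hT : Measurable T)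
    (hTr : ∀ ω, T ω ∈ Set.Icc (0 : ℝ) 1) (hK : Measurable ctx.K) (f : H) :
    Measurable fun ω => ctx.ev f (T ω) := by
  simp_rw [← ctx.reproducing _ (hTr _)]
  exact (continuous_id.inner continuous_const).measurable.comp (hK.comp hT)

variable {Ω : Type*} [MeasurableSpace Ω] {P : Measure Ω} {T : Ω → ℝ} {Y : Ω → ℝ} {C : ℝ} {mu : H}

theorem integrable_ev_comp [IsFiniteMeasure P] (hT : Measurable T)
    (hTr : ∀ ω, T ω ∈ Set.Icc (0 : ℝ) 1) (hK : Measurable ctx.K)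
    (hC : ∀ t ∈ Set.Icc (0 : ℝ) 1, ‖ctx.K t‖ ≤ C) (f : H) :
    Integrable (fun ω => ctx.ev f (T ω)) P :=
  .of_bound (ctx.measurable_ev_comp hT hTr hK f).aestronglyMeasurable _
    (.of_forall fun ω => ctx.norm_ev_le hC (hTr ω) f)

theorem integrable_ev_comp_mul [IsFiniteMeasure P] (hT : Measurable T)
    (hTr : ∀ ω, T ω ∈ Set.Icc (0 : ℝ) 1) (hK : Measurable ctx.K)
    (hC : ∀ t ∈ Set.Icc (0 : ℝ) 1, ‖ctx.K t‖ ≤ C) (f : H) {Z : Ω → ℝ} (hZ : Integrable Z P) :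
    Integrable (fun ω => ctx.ev f (T ω) * Z ω) P :=
  hZ.bdd_mul (ctx.measurable_ev_comp hT hTr hK f).aestronglyMeasurable
    (.of_forall fun ω => ctx.norm_ev_le hC (hTr ω) f)

theorem integral_ev_comp_mul_eq_V [IsFiniteMeasure P] (hT : Measurable T)
    (hTr : ∀ ω, T ω ∈ Set.Icc (0 : ℝ) 1) (hK : Measurable ctx.K)
    (hC : ∀ t ∈ Set.Icc (0 : ℝ) 1, ‖ctx.K t‖ ≤ C)
    (hV : ∀ f g : H, ctx.V f g = ∫ ω, ctx.ev f (T ω) * ctx.ev g (T ω) ∂P)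
    (hY : Integrable Y P)
    (hcond : P[Y | MeasurableSpace.comap T inferInstance] =ᵐ[P] fun ω => ctx.ev mu (T ω))
    (g : H) : ∫ ω, ctx.ev g (T ω) * Y ω ∂P = ctx.V g mu := by
  rw [hV, integral_mul_eq_of_condExp_eq hT.comap_le
    (ctx.measurable_ev_comp (comap_measurable T) hTr hK g).stronglyMeasurable
    (fun ω => ctx.norm_ev_le hC (hTr ω) g) hY hcond]

theorem integrable_score [IsFiniteMeasure P] [SecondCountableTopology H] (hT : Measurable T)
    (hTr : ∀ ω, T ω ∈ Set.Icc (0 : ℝ) 1) (hK : Measurable ctx.K)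
    (hC : ∀ t ∈ Set.Icc (0 : ℝ) 1, ‖ctx.K t‖ ≤ C) (hY : Integrable Y P) (f : H) :
    Integrable (fun ω => (Y ω - ctx.ev f (T ω)) • ctx.K (T ω)) P :=
  (hY.sub (ctx.integrable_ev_comp hT hTr hK hC f)).smul_bdd C (hK.comp hT).aestronglyMeasurable
    (.of_forall fun ω => hC _ (hTr ω))

theorem integral_score_eq [IsFiniteMeasure P] [SecondCountableTopology H] [CompleteSpace H]
    (hT : Measurable T) (hTr : ∀ ω, T ω ∈ Set.Icc (0 : ℝ) 1) (hK : Measurable ctx.K)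
    (hC : ∀ t ∈ Set.Icc (0 : ℝ) 1, ‖ctx.K t‖ ≤ C)
    (hV : ∀ f g : H, ctx.V f g = ∫ ω, ctx.ev f (T ω) * ctx.ev g (T ω) ∂P)
    (hY : Integrable Y P)
    (hcond : P[Y | MeasurableSpace.comap T inferInstance] =ᵐ[P] fun ω => ctx.ev mu (T ω))
    (f : H) :
    ∫ ω, (Y ω - ctx.ev f (T ω)) • ctx.K (T ω) ∂P = (mu - f) - ctx.W (mu - f) := by
  refine ctx.eq_sub_W_of_inner_eq_V fun g => ?_
  have hYg := ctx.integrable_ev_comp_mul hT hTr hK hC g hY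
  have hfg := ctx.integrable_ev_comp_mul hT hTr hK hC f
    (ctx.integrable_ev_comp (P := P) hT hTr hK hC g)
  calc ⟪∫ ω, (Y ω - ctx.ev f (T ω)) • ctx.K (T ω) ∂P, g⟫
      = ∫ ω, ⟪g, (Y ω - ctx.ev f (T ω)) • ctx.K (T ω)⟫ ∂P := by
        rw [real_inner_comm, integral_inner (ctx.integrable_score hT hTr hK hC hY f)]
    _ = ∫ ω, (ctx.ev g (T ω) * Y ω - ctx.ev f (T ω) * ctx.ev g (T ω)) ∂P := by
        congr 1 with ω
        rw [real_inner_smul_right, real_inner_comm, ctx.reproducing _ (hTr ω)]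
        ring
    _ = ctx.V (mu - f) g := by
        rw [integral_sub hYg hfg, ctx.integral_ev_comp_mul_eq_V hT hTr hK hC hV hY hcond, ← hV,
          map_sub, LinearMap.sub_apply, ctx.V_symm g mu]

end RKHSContext

/-- With `S_λ(f) = −𝔼[(Y − f(T)) K_T] + W_λ f`, one has
`S_λ(f) = (f − μ) + W_λ μ` for every `f ∈ ℋ`; consequently `f_λ := μ − W_λ μ` is the
unique zero of `S_λ`, and `‖μ − f_λ‖ = ‖W_λ μ‖ ≤ (λ J(μ,μ))^{1/2} = h^m J(μ,μ)^{1/2}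
≤ h^m (J(μ,μ)+1)^{1/2}`. -/
theorem population_score_and_bias_bound
    (m lam : ℝ) (hm : 1/2 < m) (hlam : 0 < lam)
    {H : Type*} [NormedAddCommGroup H] [InnerProductSpace ℝ H] [CompleteSpace H]
    [MeasurableSpace H] [BorelSpace H]
    (ctx : RKHSContext lam H)
    (c₀ : ℝ) (hc₀ : 0 < c₀)
    (hγ : ∀ v : ℕ, c₀ * ((v : ℝ) + 1) ^ (2 * m) ≤ ctx.γ v)
    {Ω : Type*} [MeasurableSpace Ω] (P : Measure Ω) [IsProbabilityMeasure P]
    (T : Ω → ℝ) (hT : Measurable T) (hTr : ∀ ω, T ω ∈ Set.Icc (0:ℝ) 1)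
    (hV : ∀ f g : H, ctx.V f g = ∫ ω, ctx.ev f (T ω) * ctx.ev g (T ω) ∂P)
    (hK : Measurable ctx.K)
    (Y : Ω → ℝ) (hY : MemLp Y 2 P)
    (mu : H)
    (hcond : P[Y | MeasurableSpace.comap T (inferInstance : MeasurableSpace ℝ)]
        =ᵐ[P] fun ω => ctx.ev mu (T ω)) :
    (∀ f : H, Integrable (fun ω => (Y ω - ctx.ev f (T ω)) • ctx.K (T ω)) P) ∧
    (∀ f : H,
      (-(∫ ω, (Y ω - ctx.ev f (T ω)) • ctx.K (T ω) ∂P)) + ctx.W f = (f - mu) + ctx.W mu) ∧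
    ((-(∫ ω, (Y ω - ctx.ev (mu - ctx.W mu) (T ω)) • ctx.K (T ω) ∂P))
        + ctx.W (mu - ctx.W mu) = 0) ∧
    (∀ f : H,
      (-(∫ ω, (Y ω - ctx.ev f (T ω)) • ctx.K (T ω) ∂P)) + ctx.W f = 0 → f = mu - ctx.W mu) ∧
    ‖mu - (mu - ctx.W mu)‖ = ‖ctx.W mu‖ ∧
    ‖ctx.W mu‖ ≤ Real.sqrt (lam * ctx.J mu mu) ∧
    Real.sqrt (lam * ctx.J mu mu) = (lam ^ (1/(2*m))) ^ m * Real.sqrt (ctx.J mu mu) ∧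
    (lam ^ (1/(2*m))) ^ m * Real.sqrt (ctx.J mu mu)
      ≤ (lam ^ (1/(2*m))) ^ m * Real.sqrt (ctx.J mu mu + 1) := by
  obtain ⟨C, hC⟩ := ctx.exists_norm_K_le hm hlam hc₀ hγ
  have := ctx.secondCountableTopology
  have hY₁ : Integrable Y P := hY.integrable one_le_two
  have hscore (f : H) :
      -(∫ ω, (Y ω - ctx.ev f (T ω)) • ctx.K (T ω) ∂P) + ctx.W f = (f - mu) + ctx.W mu := by
    rw [ctx.integral_score_eq hT hTr hK hC hV hY₁ hcond, map_sub]
    abel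
  refine ⟨ctx.integrable_score hT hTr hK hC hY₁, hscore, by rw [hscore]; abel, fun f hf => ?_,
    by rw [sub_sub_cancel], ctx.norm_W_le hlam.le mu, ?_, ?_⟩
  · rw [hscore] at hf
    rw [← sub_eq_zero, ← hf]
    abel
  · rw [rpow_one_div_two_mul_rpow_eq_sqrt hlam.le (by linarith), Real.sqrt_mul hlam.le]
  · gcongr
    linarith
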